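/- arXiv:2510.02540 — 4 statements merged into one kernel-verified Lean document; each statement's English description precedes it below -/
import Mathlib

section
/- Let K be an n×n real symmetric PSD matrix with top eigenvalue λ₁, top unit eigenvector v₁, and suppose a sequence of unit vectors z_t satisfies z_{t+1} = z̃_{t+1}/‖z̃_{t+1}‖ where z̃_{t+1} = K z_t + ‖K z_t‖ δ u_t for unit vectors u_t with ⟨v₁, u_t⟩ ≥ 0. If z_tᵀ K z_t ≤ (1 − ε/2)λ₁ for all t ≤ T, then for all such t, ⟨v₁, z_{t+1}⟩ ≥ ⟨v₁, z_t⟩ / ((1+δ)√(1−ε/2)). -/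
/-!
Since `K` is symmetric, `⟨v₁, K z⟩ = λ₁ ⟨v₁, z⟩`, and the perturbation `‖K z‖ δ u` only adds to
the component along `v₁`; so the unnormalised iterate has `v₁`-component at least `λ₁ ⟨v₁, z_t⟩`.
The eigenvalues of `K` lie in `[0, λ₁]`, so `λ₁ K - K²` is positive semidefinite, i.e.
`‖K z‖² ≤ λ₁ zᵀ K z ≤ (1 - ε/2) λ₁²`, and the normaliser is at most `(1 + δ) λ₁ √(1 - ε/2)`.
Dividing gives the bound whenever `⟨v₁, z_t⟩ ≥ 0`, and that sign condition propagates from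
`t = 0` by the bound itself.
-/

open Matrix

/-- Euclidean norm of a vector in `ℝⁿ`. -/
noncomputable def eucNorm {n : ℕ} (x : Fin n → ℝ) : ℝ := Real.sqrt (∑ i, x i ^ 2)

section eucNorm

variable {n : ℕ}

theorem eucNorm_eq_norm_toLp (x : Fin n → ℝ) : eucNorm x = ‖WithLp.toLp 2 x‖ := by
  simp [eucNorm, EuclideanSpace.norm_eq]

theorem eucNorm_eq_sqrt_dotProduct (x : Fin n → ℝ) : eucNorm x = √(x ⬝ᵥ x) := by
  simp [eucNorm, dotProduct, sq]

theorem eucNorm_add_le (x y : Fin n → ℝ) : eucNorm (x + y) ≤ eucNorm x + eucNorm y := by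
  simpa only [eucNorm_eq_norm_toLp, WithLp.toLp_add] using norm_add_le _ _

theorem eucNorm_smul (c : ℝ) (x : Fin n → ℝ) : eucNorm (c • x) = |c| * eucNorm x := by
  simp only [eucNorm_eq_norm_toLp, WithLp.toLp_smul, norm_smul, Real.norm_eq_abs]

end eucNorm

namespace Matrix

variable {ι : Type*} [Fintype ι]

theorem IsHermitian.dotProduct_mulVec_comm {K : Matrix ι ι ℝ} (hK : K.IsHermitian)
    (x y : ι → ℝ) : x ⬝ᵥ K *ᵥ y = K *ᵥ x ⬝ᵥ y := by
  rw [dotProduct_mulVec, ← mulVec_transpose, ← conjTranspose_eq_transpose_of_trivial, hK.eq]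

theorem IsHermitian.dotProduct_mulVec_of_mulVec_eq_smul {K : Matrix ι ι ℝ} (hK : K.IsHermitian)
    {c : ℝ} {v : ι → ℝ} (hv : K *ᵥ v = c • v) (x : ι → ℝ) : v ⬝ᵥ K *ᵥ x = c * (v ⬝ᵥ x) := by
  rw [hK.dotProduct_mulVec_comm, hv, smul_dotProduct, smul_eq_mul]

theorem PosSemidef.nonneg_of_mulVec_eq_smul {K : Matrix ι ι ℝ} (hK : K.PosSemidef) {c : ℝ}
    {v : ι → ℝ} (hv0 : v ≠ 0) (hv : K *ᵥ v = c • v) : 0 ≤ c := by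
  have hvKv : 0 ≤ c * (v ⬝ᵥ v) := by
    simpa only [star_trivial, hv, dotProduct_smul, smul_eq_mul] using hK.dotProduct_mulVec_nonneg v
  have hvv : 0 < v ⬝ᵥ v :=
    (by simpa only [star_trivial] using dotProduct_star_self_nonneg v : 0 ≤ v ⬝ᵥ v).lt_of_ne
      (Ne.symm (mt dotProduct_self_eq_zero.mp hv0))
  exact nonneg_of_mul_nonneg_left hvKv hvv

variable [DecidableEq ι]

open scoped MatrixOrder in
theorem PosSemidef.smul_sub_mul_self {K : Matrix ι ι ℝ} (hK : K.PosSemidef) {c : ℝ}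
    (hc : ∀ i, hK.1.eigenvalues i ≤ c) : (c • K - K * K).PosSemidef := by
  have hsa : IsSelfAdjoint K := hK.1
  have hcfc : c • K - K * K = cfc (fun x : ℝ => c * x - x * x) K := by
    rw [cfc_sub .., cfc_const_mul .., cfc_mul .., cfc_id' ℝ K]
  rw [← nonneg_iff_posSemidef, hcfc]
  refine cfc_nonneg fun x hx => ?_
  obtain ⟨i, rfl⟩ := hK.1.spectrum_real_eq_range_eigenvalues ▸ hx
  nlinarith [hK.eigenvalues_nonneg i, hc i]

theorem PosSemidef.mulVec_dotProduct_mulVec_le {K : Matrix ι ι ℝ} (hK : K.PosSemidef) {c : ℝ}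
    (hc : ∀ i, hK.1.eigenvalues i ≤ c) (x : ι → ℝ) :
    K *ᵥ x ⬝ᵥ K *ᵥ x ≤ c * (x ⬝ᵥ K *ᵥ x) := by
  have h := (hK.smul_sub_mul_self hc).dotProduct_mulVec_nonneg x
  rw [star_trivial, sub_mulVec, smul_mulVec, dotProduct_sub, dotProduct_smul, smul_eq_mul,
    ← mulVec_mulVec, hK.1.dotProduct_mulVec_comm x (K *ᵥ x)] at h
  linarith

end Matrix

section PerturbedPowerMethod

variable {n : ℕ}

noncomputable def perturbedPowerStep (K : Matrix (Fin n) (Fin n) ℝ) (δ : ℝ) (z u : Fin n → ℝ) :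
    Fin n → ℝ :=
  K *ᵥ z + (eucNorm (K *ᵥ z) * δ) • u

theorem mul_dotProduct_le_dotProduct_perturbedPowerStep {K : Matrix (Fin n) (Fin n) ℝ}
    (hK : K.IsHermitian) {c : ℝ} {v : Fin n → ℝ} (hv : K *ᵥ v = c • v) {δ : ℝ} (hδ : 0 ≤ δ)
    (z : Fin n → ℝ) {u : Fin n → ℝ} (hvu : 0 ≤ v ⬝ᵥ u) :
    c * (v ⬝ᵥ z) ≤ v ⬝ᵥ perturbedPowerStep K δ z u := by
  rw [perturbedPowerStep, dotProduct_add, dotProduct_smul, smul_eq_mul,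
    hK.dotProduct_mulVec_of_mulVec_eq_smul hv]
  exact le_add_of_nonneg_right <| mul_nonneg (mul_nonneg (Real.sqrt_nonneg _) hδ) hvu

theorem eucNorm_perturbedPowerStep_le (K : Matrix (Fin n) (Fin n) ℝ) {δ : ℝ} (hδ : 0 ≤ δ)
    (z : Fin n → ℝ) {u : Fin n → ℝ} (hu : eucNorm u = 1) :
    eucNorm (perturbedPowerStep K δ z u) ≤ (1 + δ) * eucNorm (K *ᵥ z) := by
  have hKz : 0 ≤ eucNorm (K *ᵥ z) := Real.sqrt_nonneg _
  calc eucNorm (perturbedPowerStep K δ z u)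
      ≤ eucNorm (K *ᵥ z) + eucNorm ((eucNorm (K *ᵥ z) * δ) • u) := eucNorm_add_le _ _
    _ = (1 + δ) * eucNorm (K *ᵥ z) := by
      rw [eucNorm_smul, hu, abs_of_nonneg (mul_nonneg hKz hδ)]
      ring

theorem eucNorm_mulVec_le_of_dotProduct_mulVec_le {K : Matrix (Fin n) (Fin n) ℝ}
    (hK : K.PosSemidef) {c : ℝ} (hc : ∀ i, hK.1.eigenvalues i ≤ c) (hc0 : 0 ≤ c) {ρ : ℝ}
    {z : Fin n → ℝ} (hz : z ⬝ᵥ K *ᵥ z ≤ ρ * c) : eucNorm (K *ᵥ z) ≤ c * √ρ := by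
  rw [eucNorm_eq_sqrt_dotProduct, ← Real.sqrt_sq hc0, ← Real.sqrt_mul (sq_nonneg c)]
  refine Real.sqrt_le_sqrt ?_
  calc K *ᵥ z ⬝ᵥ K *ᵥ z ≤ c * (z ⬝ᵥ K *ᵥ z) := hK.mulVec_dotProduct_mulVec_le hc z
    _ ≤ c * (ρ * c) := mul_le_mul_of_nonneg_left hz hc0
    _ = c ^ 2 * ρ := by ring

theorem div_le_dotProduct_normalize_perturbedPowerStep {K : Matrix (Fin n) (Fin n) ℝ}
    (hK : K.PosSemidef) {c : ℝ} (hc : ∀ i, hK.1.eigenvalues i ≤ c) (hc0 : 0 ≤ c)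
    {v : Fin n → ℝ} (hv : K *ᵥ v = c • v) {δ ρ : ℝ} (hδ : 0 ≤ δ) {z u : Fin n → ℝ}
    (hvz : 0 ≤ v ⬝ᵥ z) (hz : z ⬝ᵥ K *ᵥ z ≤ ρ * c) (hu : eucNorm u = 1) (hvu : 0 ≤ v ⬝ᵥ u)
    (hstep : eucNorm (perturbedPowerStep K δ z u) ≠ 0) :
    (v ⬝ᵥ z) / ((1 + δ) * √ρ) ≤
      v ⬝ᵥ (eucNorm (perturbedPowerStep K δ z u))⁻¹ • perturbedPowerStep K δ z u := by
  set N := eucNorm (perturbedPowerStep K δ z u)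
  set C := (1 + δ) * √ρ
  have hN : N ≤ C * c :=
    calc N ≤ (1 + δ) * eucNorm (K *ᵥ z) := eucNorm_perturbedPowerStep_le K hδ z hu
      _ ≤ (1 + δ) * (c * √ρ) := by
        gcongr
        exact eucNorm_mulVec_le_of_dotProduct_mulVec_le hK hc hc0 hz
      _ = C * c := by ring
  have hN0 : 0 < N := (Real.sqrt_nonneg _).lt_of_ne' hstep
  have hC : 0 < C := pos_of_mul_pos_left (hN0.trans_le hN) hc0
  have hnum := mul_dotProduct_le_dotProduct_perturbedPowerStep hK.1 hv hδ z hvu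
  rw [dotProduct_smul, smul_eq_mul, ← div_eq_inv_mul, div_le_div_iff₀ hC hN0]
  nlinarith [mul_le_mul_of_nonneg_left hN hvz]

end PerturbedPowerMethod

theorem stmt4_general {n : ℕ} (K : Matrix (Fin n) (Fin n) ℝ) (hK : K.PosSemidef)
    (lam1 : ℝ) (v1 : Fin n → ℝ)
    (heig : K.mulVec v1 = lam1 • v1) (hv1 : eucNorm v1 = 1)
    (htop : ∀ i, hK.1.eigenvalues i ≤ lam1)
    (δ ε : ℝ) (hδ : 0 < δ)
    (z u : ℕ → Fin n → ℝ)
    (hz0 : 1 / Real.sqrt n ≤ v1 ⬝ᵥ z 0)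
    (hznorm : ∀ t, eucNorm (z t) = 1)
    (hunorm : ∀ t, eucNorm (u t) = 1) (hupos : ∀ t, 0 ≤ v1 ⬝ᵥ u t)
    (hrec : ∀ t, z (t + 1) =
      (eucNorm (K.mulVec (z t) + (eucNorm (K.mulVec (z t)) * δ) • u t))⁻¹ •
        (K.mulVec (z t) + (eucNorm (K.mulVec (z t)) * δ) • u t))
    (T : ℕ)
    (hsmall : ∀ t ≤ T, z t ⬝ᵥ K.mulVec (z t) ≤ (1 - ε / 2) * lam1) :
    ∀ t ≤ T, (v1 ⬝ᵥ z t) / ((1 + δ) * Real.sqrt (1 - ε / 2)) ≤ v1 ⬝ᵥ z (t + 1) := by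
  have hv1ne : v1 ≠ 0 := by
    rintro rfl
    simp [eucNorm] at hv1
  have hlam1 : 0 ≤ lam1 := hK.nonneg_of_mulVec_eq_smul hv1ne heig
  have hC : 0 ≤ (1 + δ) * √(1 - ε / 2) := by positivity
  have hstep : ∀ t ≤ T, 0 ≤ v1 ⬝ᵥ z t →
      (v1 ⬝ᵥ z t) / ((1 + δ) * √(1 - ε / 2)) ≤ v1 ⬝ᵥ z (t + 1) := by
    intro t ht hvz
    have hz : z (t + 1) = (eucNorm (perturbedPowerStep K δ (z t) (u t)))⁻¹ •
        perturbedPowerStep K δ (z t) (u t) := hrec t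
    have hne : eucNorm (perturbedPowerStep K δ (z t) (u t)) ≠ 0 := fun h => by
      have h1 := hznorm (t + 1)
      rw [hz, eucNorm_smul, h, mul_zero] at h1
      exact zero_ne_one h1
    rw [hz]
    exact div_le_dotProduct_normalize_perturbedPowerStep hK htop hlam1 heig hδ.le hvz
      (hsmall t ht) (hunorm t) (hupos t) hne
  have hnonneg : ∀ t ≤ T, 0 ≤ v1 ⬝ᵥ z t := by
    intro t
    induction t with
    | zero => exact fun _ => (one_div_nonneg.mpr (Real.sqrt_nonneg _)).trans hz0
    | succ t ih =>
      exact fun ht => (div_nonneg (ih (by omega)) hC).trans (hstep t (by omega) (ih (by omega)))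
  exact fun t ht => hstep t ht (hnonneg t ht)

theorem stmt4 {n : ℕ} (K : Matrix (Fin n) (Fin n) ℝ) (hK : K.PosSemidef)
    (lam1 : ℝ) (v1 : Fin n → ℝ)
    (heig : K.mulVec v1 = lam1 • v1) (hv1 : eucNorm v1 = 1)
    (htop : ∀ i, hK.1.eigenvalues i ≤ lam1)
    (δ ε : ℝ) (hδ : 0 < δ) (hδ1 : δ < 1) (hε : 0 < ε) (hε1 : ε < 1)
    (z u : ℕ → Fin n → ℝ)
    (hz0 : 1 / Real.sqrt n ≤ v1 ⬝ᵥ z 0)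
    (hznorm : ∀ t, eucNorm (z t) = 1)
    (hunorm : ∀ t, eucNorm (u t) = 1) (hupos : ∀ t, 0 ≤ v1 ⬝ᵥ u t)
    (hrec : ∀ t, z (t + 1) =
      (eucNorm (K.mulVec (z t) + (eucNorm (K.mulVec (z t)) * δ) • u t))⁻¹ •
        (K.mulVec (z t) + (eucNorm (K.mulVec (z t)) * δ) • u t))
    (T : ℕ)
    (hsmall : ∀ t ≤ T, z t ⬝ᵥ K.mulVec (z t) ≤ (1 - ε / 2) * lam1) :
    ∀ t ≤ T, (v1 ⬝ᵥ z t) / ((1 + δ) * Real.sqrt (1 - ε / 2)) ≤ v1 ⬝ᵥ z (t + 1) :=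
  stmt4_general K hK lam1 v1 heig hv1 htop δ ε hδ z u hz0 hznorm hunorm hupos hrec T hsmall
end

section
/- Let K be a symmetric PSD n×n matrix with top eigenvalue λ₁ and top unit eigenvector v₁ with nonnegative entries, let δ = ε/8 ≤ 0.01, let z_0 = (1/√n)·𝟙 so ⟨v₁, z_0⟩ ≥ 1/√n, and let z_t follow δ-approximate power iteration (z̃_{t+1} = Kz_t + ‖Kz_t‖δu_t with ⟨v₁,u_t⟩ ≥ 0, z_{t+1} = z̃_{t+1}/‖z̃_{t+1}‖). If T = 10 log(n)/ε, then there exists t ∈ [0,T] with z_tᵀ K z_t ≥ (1 − ε/2)·λ₁. -/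
/-!
While `z_tᵀ K z_t ≤ (1 - ε/2) λ₁`, the operator inequality `K² ≤ λ₁ K` gives
`‖K z_t‖ ≤ λ₁ √(1 - ε/2)`. The perturbation can only increase `⟨v₁, K z_t⟩ = λ₁ ⟨v₁, z_t⟩`
(as `⟨v₁, u_t⟩ ≥ 0`) and inflates the norm by at most `1 + δ`, so each step multiplies
`⟨v₁, z_t⟩` by at least `((1 + δ) √(1 - ε/2))⁻¹ ≥ e^{ε/8}`. Starting from
`⟨v₁, z_0⟩ ≥ n^{-1/2}`, after `T ≥ 10 log n / ε` steps this exceeds `1`, which is impossible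
for the unit vectors `v₁` and `z_T`.
-/

open Matrix

/-- Euclidean norm of a vector in `ℝⁿ`. -/
noncomputable def vecEnorm {n : ℕ} (x : Fin n → ℝ) : ℝ := Real.sqrt (∑ i, x i ^ 2)

section EuclideanNorm

variable {n : ℕ}

theorem vecEnorm_eq_norm_toLp (x : Fin n → ℝ) : vecEnorm x = ‖WithLp.toLp 2 x‖ := by
  simp [vecEnorm, EuclideanSpace.norm_eq]

theorem vecEnorm_nonneg (x : Fin n → ℝ) : 0 ≤ vecEnorm x := Real.sqrt_nonneg _

theorem vecEnorm_eq_sqrt_dotProduct (x : Fin n → ℝ) : vecEnorm x = √(x ⬝ᵥ x) := by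
  simp [vecEnorm, dotProduct, sq]

theorem vecEnorm_add_le (x y : Fin n → ℝ) : vecEnorm (x + y) ≤ vecEnorm x + vecEnorm y := by
  simpa only [vecEnorm_eq_norm_toLp, WithLp.toLp_add] using norm_add_le _ _

theorem vecEnorm_smul (c : ℝ) (x : Fin n → ℝ) : vecEnorm (c • x) = |c| * vecEnorm x := by
  simp only [vecEnorm_eq_norm_toLp, WithLp.toLp_smul, norm_smul, Real.norm_eq_abs]

theorem dotProduct_le_vecEnorm_mul (x y : Fin n → ℝ) : x ⬝ᵥ y ≤ vecEnorm x * vecEnorm y := by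
  simpa only [vecEnorm_eq_norm_toLp, EuclideanSpace.inner_toLp_toLp, star_trivial,
    dotProduct_comm y] using real_inner_le_norm (WithLp.toLp 2 x) (WithLp.toLp 2 y)

theorem vecEnorm_const_inv_sqrt (hn : 0 < n) : vecEnorm (fun _ : Fin n => 1 / √n) = 1 := by
  have hn' : (0 : ℝ) < n := by exact_mod_cast hn
  simp [vecEnorm, Real.sq_sqrt hn'.le, hn'.ne']

theorem one_le_sum_of_vecEnorm_eq_one {v : Fin n → ℝ} (hv : vecEnorm v = 1)
    (hv0 : ∀ i, 0 ≤ v i) : 1 ≤ ∑ i, v i := by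
  have hsq : ∑ i, v i ^ 2 = 1 := by
    rw [← Real.sqrt_eq_one, ← hv, vecEnorm]
  have := Finset.sum_sq_le_sq_sum_of_nonneg (s := Finset.univ) fun i _ => hv0 i
  nlinarith [Finset.sum_nonneg fun i (_ : i ∈ Finset.univ) => hv0 i]

theorem inv_sqrt_le_dotProduct_const {v : Fin n → ℝ} (hv : vecEnorm v = 1)
    (hv0 : ∀ i, 0 ≤ v i) : (√n)⁻¹ ≤ v ⬝ᵥ fun _ => 1 / √n := by
  simp only [dotProduct, ← Finset.sum_mul, one_div]
  exact le_mul_of_one_le_left (by positivity) (one_le_sum_of_vecEnorm_eq_one hv hv0)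

end EuclideanNorm

theorem Matrix.IsSymm.dotProduct_mulVec {ι α : Type*} [Fintype ι] [CommSemiring α]
    {A : Matrix ι ι α} (hA : A.IsSymm) (x y : ι → α) : x ⬝ᵥ A *ᵥ y = A *ᵥ x ⬝ᵥ y := by
  rw [Matrix.dotProduct_mulVec, ← vecMul_transpose, hA.eq]

open scoped MatrixOrder in
theorem Matrix.PosSemidef.mulVec_dotProduct_mulVec_le_s6 {ι : Type*} [Fintype ι] [DecidableEq ι]
    {K : Matrix ι ι ℝ} (hK : K.PosSemidef) {lam : ℝ} (htop : ∀ i, hK.1.eigenvalues i ≤ lam)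
    (x : ι → ℝ) : K *ᵥ x ⬝ᵥ K *ᵥ x ≤ lam * (x ⬝ᵥ K *ᵥ x) := by
  have hle : K ≤ algebraMap ℝ _ lam := by
    refine le_algebraMap_of_spectrum_le (fun μ hμ => ?_) hK.1.isSelfAdjoint
    rw [hK.1.spectrum_real_eq_range_eigenvalues] at hμ
    obtain ⟨i, rfl⟩ := hμ
    exact htop i
  obtain ⟨S, hS, hSS⟩ : ∃ S : Matrix ι ι ℝ, star S = S ∧ S * S = K :=
    ⟨CFC.sqrt K, (CFC.sqrt_nonneg K).isSelfAdjoint,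
      CFC.sqrt_mul_sqrt_self K (nonneg_iff_posSemidef.2 hK)⟩
  have hconj : star S * (algebraMap ℝ _ lam - K) * S = lam • K - K * K := by
    rw [hS, Algebra.algebraMap_eq_smul_one, ← hSS]
    noncomm_ring
  -- conjugating `λ - K ≥ 0` by `√K` gives `λ K - K² ≥ 0`
  have hpsd := star_left_conjugate_nonneg (sub_nonneg.2 hle) S
  rw [hconj, nonneg_iff_posSemidef] at hpsd
  have hquad := hpsd.dotProduct_mulVec_nonneg x
  simp only [star_trivial, sub_mulVec, smul_mulVec, dotProduct_sub, dotProduct_smul,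
    ← mulVec_mulVec, smul_eq_mul,
    (isHermitian_iff_isSymm.1 hK.1).dotProduct_mulVec x (K *ᵥ x)] at hquad
  linarith

theorem Matrix.PosSemidef.vecEnorm_mulVec_le {n : ℕ} {K : Matrix (Fin n) (Fin n) ℝ}
    (hK : K.PosSemidef) {lam : ℝ} (hlam : 0 ≤ lam) (htop : ∀ i, hK.1.eigenvalues i ≤ lam)
    {c : ℝ} {z : Fin n → ℝ} (hz : z ⬝ᵥ K *ᵥ z ≤ c * lam) :
    vecEnorm (K *ᵥ z) ≤ lam * √c := by
  have h := (hK.mulVec_dotProduct_mulVec_le_s6 htop z).trans (mul_le_mul_of_nonneg_left hz hlam)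
  rw [vecEnorm_eq_sqrt_dotProduct, ← Real.sqrt_sq hlam, ← Real.sqrt_mul (sq_nonneg _)]
  exact Real.sqrt_le_sqrt (by linarith)

section ApproxPowerStep

variable {n : ℕ}

noncomputable def vecNormalize (x : Fin n → ℝ) : Fin n → ℝ := (vecEnorm x)⁻¹ • x

noncomputable def relPerturb (δ : ℝ) (u w : Fin n → ℝ) : Fin n → ℝ := w + (vecEnorm w * δ) • u

theorem vecEnorm_vecNormalize_le_one (x : Fin n → ℝ) : vecEnorm (vecNormalize x) ≤ 1 := by
  rw [vecNormalize, vecEnorm_smul, abs_inv, abs_of_nonneg (vecEnorm_nonneg x)]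
  exact inv_mul_le_one_of_le₀ le_rfl (vecEnorm_nonneg x)

theorem vecEnorm_relPerturb_le {δ : ℝ} (hδ : 0 ≤ δ) {u : Fin n → ℝ} (hu : vecEnorm u = 1)
    (w : Fin n → ℝ) : vecEnorm (relPerturb δ u w) ≤ (1 + δ) * vecEnorm w :=
  calc vecEnorm (relPerturb δ u w) ≤ vecEnorm w + |vecEnorm w * δ| * vecEnorm u :=
        (vecEnorm_add_le _ _).trans_eq (by rw [vecEnorm_smul])
    _ = (1 + δ) * vecEnorm w := by
        rw [hu, abs_of_nonneg (mul_nonneg (vecEnorm_nonneg w) hδ)]; ring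

theorem dotProduct_le_dotProduct_relPerturb {δ : ℝ} (hδ : 0 ≤ δ) {u v : Fin n → ℝ}
    (hvu : 0 ≤ v ⬝ᵥ u) (w : Fin n → ℝ) : v ⬝ᵥ w ≤ v ⬝ᵥ relPerturb δ u w := by
  rw [relPerturb, dotProduct_add, dotProduct_smul, smul_eq_mul]
  have := mul_nonneg (mul_nonneg (vecEnorm_nonneg w) hδ) hvu
  linarith

theorem div_le_dotProduct_vecNormalize_relPerturb {K : Matrix (Fin n) (Fin n) ℝ}
    (hK : K.IsSymm) {lam : ℝ} (hlam : 0 < lam) {v : Fin n → ℝ} (hv : vecEnorm v = 1)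
    (heig : K *ᵥ v = lam • v) {δ : ℝ} (hδ : 0 ≤ δ) {u : Fin n → ℝ} (hu : vecEnorm u = 1)
    (hvu : 0 ≤ v ⬝ᵥ u) {z : Fin n → ℝ} (hvz : 0 < v ⬝ᵥ z) {r : ℝ}
    (hKz : vecEnorm (K *ᵥ z) ≤ lam * r) :
    (v ⬝ᵥ z) / ((1 + δ) * r) ≤ v ⬝ᵥ vecNormalize (relPerturb δ u (K *ᵥ z)) := by
  set p := relPerturb δ u (K *ᵥ z)
  have hnum : lam * (v ⬝ᵥ z) ≤ v ⬝ᵥ p := by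
    have := dotProduct_le_dotProduct_relPerturb hδ hvu (K *ᵥ z)
    rwa [hK.dotProduct_mulVec, heig, smul_dotProduct, smul_eq_mul] at this
  have hnum_pos : 0 < v ⬝ᵥ p := (mul_pos hlam hvz).trans_le hnum
  have hden : vecEnorm p ≤ lam * ((1 + δ) * r) :=
    calc vecEnorm p ≤ (1 + δ) * vecEnorm (K *ᵥ z) := vecEnorm_relPerturb_le hδ hu (K *ᵥ z)
      _ ≤ (1 + δ) * (lam * r) := mul_le_mul_of_nonneg_left hKz (by linarith)
      _ = lam * ((1 + δ) * r) := by ring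
  have hden_pos : 0 < vecEnorm p := by
    simpa [hv] using hnum_pos.trans_le (dotProduct_le_vecEnorm_mul v p)
  rw [vecNormalize, dotProduct_smul, smul_eq_mul, inv_mul_eq_div,
    ← mul_div_mul_left _ _ hlam.ne']
  exact div_le_div₀ hnum_pos.le hnum hden_pos hden

end ApproxPowerStep

theorem pow_mul_le_of_mul_le_succ {a : ℕ → ℝ} {ρ b : ℝ} {T : ℕ} (hρ : 0 < ρ) (hb : 0 < b)
    (h0 : b ≤ a 0) (hstep : ∀ t < T, 0 < a t → ρ * a t ≤ a (t + 1)) :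
    ∀ t ≤ T, ρ ^ t * b ≤ a t := by
  intro t ht
  induction t with
  | zero => simpa using h0
  | succ t ih =>
    have ih := ih (by omega)
    have hpos : 0 < a t := lt_of_lt_of_le (by positivity) ih
    calc ρ ^ (t + 1) * b = ρ * (ρ ^ t * b) := by ring
      _ ≤ ρ * a t := by gcongr
      _ ≤ a (t + 1) := hstep t (by omega) hpos

theorem exp_le_inv_one_add_mul_sqrt {ε : ℝ} (hε : 0 < ε) (hε2 : ε < 2) :
    Real.exp (ε / 8) ≤ ((1 + ε / 8) * √(1 - ε / 2))⁻¹ := by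
  have hsqrt : √(1 - ε / 2) ≤ Real.exp (-(ε / 4)) := by
    rw [show -(ε / 4) = -(ε / 2) / 2 by ring, Real.exp_half]
    exact Real.sqrt_le_sqrt (by linarith [Real.add_one_le_exp (-(ε / 2))])
  have hle : (1 + ε / 8) * √(1 - ε / 2) ≤ Real.exp (-(ε / 8)) :=
    calc (1 + ε / 8) * √(1 - ε / 2) ≤ Real.exp (ε / 8) * Real.exp (-(ε / 4)) := by
          gcongr
          linarith [Real.add_one_le_exp (ε / 8)]
      _ = Real.exp (-(ε / 8)) := by rw [← Real.exp_add]; ring_nf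
  have hpos : 0 < (1 + ε / 8) * √(1 - ε / 2) := by
    have : 0 < 1 - ε / 2 := by linarith
    positivity
  simpa [Real.exp_neg] using inv_anti₀ hpos hle

theorem one_lt_inv_one_add_mul_sqrt_pow_mul {n : ℕ} (hn : 2 ≤ n) {ε : ℝ} (hε : 0 < ε)
    (hε2 : ε < 2) {T : ℕ} (hT : 10 * Real.log n / ε ≤ T) :
    1 < ((1 + ε / 8) * √(1 - ε / 2))⁻¹ ^ T * (√n)⁻¹ := by
  have hn1 : (1 : ℝ) < n := by exact_mod_cast hn
  have hsqrt : 0 < √n := Real.sqrt_pos.2 (by linarith)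
  have hlt : √n < Real.exp (ε / 8 * T) := by
    rw [← Real.exp_log hsqrt, Real.log_sqrt (by linarith), Real.exp_lt_exp]
    nlinarith [Real.log_pos hn1, (div_le_iff₀ hε).1 hT]
  rw [← div_eq_mul_inv, one_lt_div hsqrt]
  calc √n < Real.exp (ε / 8 * T) := hlt
    _ = Real.exp (ε / 8) ^ T := by rw [mul_comm, Real.exp_nat_mul]
    _ ≤ _ := pow_le_pow_left₀ (Real.exp_pos _).le (exp_le_inv_one_add_mul_sqrt hε hε2) T

theorem stmt6_general {n : ℕ} (hn : 2 ≤ n) (K : Matrix (Fin n) (Fin n) ℝ) (hK : K.PosSemidef)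
    (lam1 : ℝ) (v1 : Fin n → ℝ)
    (heig : K.mulVec v1 = lam1 • v1) (hv1 : vecEnorm v1 = 1) (hv1nn : ∀ i, 0 ≤ v1 i)
    (htop : ∀ i, hK.1.eigenvalues i ≤ lam1)
    (ε : ℝ) (hε : 0 < ε) (hε1 : ε ≤ 0.08)
    (δ : ℝ) (hδ : δ = ε / 8)
    (z u : ℕ → Fin n → ℝ)
    (hz0 : z 0 = fun _ => 1 / Real.sqrt n)
    (hunorm : ∀ t, vecEnorm (u t) = 1) (hupos : ∀ t, 0 ≤ v1 ⬝ᵥ u t)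
    (hrec : ∀ t, z (t + 1) =
      (vecEnorm (K.mulVec (z t) + (vecEnorm (K.mulVec (z t)) * δ) • u t))⁻¹ •
        (K.mulVec (z t) + (vecEnorm (K.mulVec (z t)) * δ) • u t))
    (T : ℕ) (hT : 10 * Real.log n / ε ≤ T) :
    ∃ t ≤ T, (1 - ε / 2) * lam1 ≤ z t ⬝ᵥ K.mulVec (z t) := by
  have hn0 : 0 < n := by omega
  have hstep : ∀ t, z (t + 1) = vecNormalize (relPerturb δ (u t) (K *ᵥ z t)) := hrec
  obtain rfl | hlam := ((hK.eigenvalues_nonneg ⟨0, hn0⟩).trans (htop _)).eq_or_lt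
  · exact ⟨0, T.zero_le, by simpa using hK.dotProduct_mulVec_nonneg (z 0)⟩
  by_contra! hstall
  subst hδ
  have hε2 : ε < 2 := by norm_num at hε1; linarith
  have hgrowth : ∀ t ≤ T, ((1 + ε / 8) * √(1 - ε / 2))⁻¹ ^ t * (√n)⁻¹ ≤ v1 ⬝ᵥ z t := by
    refine pow_mul_le_of_mul_le_succ
      ((Real.exp_pos _).trans_le (exp_le_inv_one_add_mul_sqrt hε hε2)) (by positivity)
      (hz0 ▸ inv_sqrt_le_dotProduct_const hv1 hv1nn) fun t ht hpos => ?_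
    rw [hstep t, ← div_eq_inv_mul]
    exact div_le_dotProduct_vecNormalize_relPerturb (isHermitian_iff_isSymm.1 hK.1) hlam hv1 heig
      (by positivity) (hunorm t) (hupos t) hpos
      (hK.vecEnorm_mulVec_le hlam.le htop (hstall t ht.le).le)
  have hzT : vecEnorm (z T) ≤ 1 := by
    cases T with
    | zero => rw [hz0, vecEnorm_const_inv_sqrt hn0]
    | succ T => exact hstep T ▸ vecEnorm_vecNormalize_le_one _
  have hvzT : v1 ⬝ᵥ z T ≤ 1 :=
    (dotProduct_le_vecEnorm_mul v1 (z T)).trans (by rw [hv1, one_mul]; exact hzT)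
  linarith [hgrowth T le_rfl, one_lt_inv_one_add_mul_sqrt_pow_mul hn hε hε2 hT]

theorem stmt6 {n : ℕ} (hn : 2 ≤ n) (K : Matrix (Fin n) (Fin n) ℝ) (hK : K.PosSemidef)
    (hKnn : ∀ i j, 0 ≤ K i j)
    (lam1 : ℝ) (v1 : Fin n → ℝ)
    (heig : K.mulVec v1 = lam1 • v1) (hv1 : vecEnorm v1 = 1) (hv1nn : ∀ i, 0 ≤ v1 i)
    (htop : ∀ i, hK.1.eigenvalues i ≤ lam1)
    (ε : ℝ) (hε : 0 < ε) (hε1 : ε ≤ 0.08)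
    (δ : ℝ) (hδ : δ = ε / 8)
    (z u : ℕ → Fin n → ℝ)
    (hz0 : z 0 = fun _ => 1 / Real.sqrt n)
    (hunorm : ∀ t, vecEnorm (u t) = 1) (hupos : ∀ t, 0 ≤ v1 ⬝ᵥ u t)
    (hrec : ∀ t, z (t + 1) =
      (vecEnorm (K.mulVec (z t) + (vecEnorm (K.mulVec (z t)) * δ) • u t))⁻¹ •
        (K.mulVec (z t) + (vecEnorm (K.mulVec (z t)) * δ) • u t))
    (T : ℕ) (hT : 10 * Real.log n / ε ≤ T) :
    ∃ t ≤ T, (1 - ε / 2) * lam1 ≤ z t ⬝ᵥ K.mulVec (z t) :=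
  stmt6_general hn K hK lam1 v1 heig hv1 hv1nn htop ε hε hε1 δ hδ z u hz0 hunorm hupos hrec T hT
end

section
/- Let K be a symmetric n×n matrix with all entries in [0, α] for some 0 ≤ α ≤ 1, and suppose every off-diagonal row sum of K is at most β ≥ 0. Let A ⊆ [n] be a random subset including each index independently with probability q ∈ (0,1], let s_o(K_A) be the sum of off-diagonal entries of the principal submatrix K_A, and set Z = tr(K) + s_o(K_A)/q². Then E[Z] = s(K) (the sum of all entries of K) and Var[Z] ≤ C·(α q^{−2} + β q^{−1})·s(K) for an absolute constant C. -/
open Matrix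

/-- Sum of the off-diagonal entries of the principal submatrix of `K` indexed by `A`. -/
noncomputable def soff {n : ℕ} (K : Matrix (Fin n) (Fin n) ℝ) (A : Finset (Fin n)) : ℝ :=
  ∑ i ∈ A, ∑ j ∈ A, if i = j then 0 else K i j

/-- Probability of picking exactly the subset `A` when each of the `n` indices is
included independently with probability `q`. -/
noncomputable def wt (n : ℕ) (q : ℝ) (A : Finset (Fin n)) : ℝ :=
  q ^ A.card * (1 - q) ^ (n - A.card)

private lemma key_moment {n : ℕ} (q : ℝ) (S : Finset (Fin n)) :
    ∑ A ∈ Finset.univ.powerset, wt n q A * (if S ⊆ A then (1:ℝ) else 0) = q ^ S.card := by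
  have h : ∀ A ∈ (Finset.univ : Finset (Fin n)).powerset, wt n q A * (if S ⊆ A then (1:ℝ) else 0)
      = (∏ i ∈ A, q) * ∏ i ∈ Finset.univ \ A, (if i ∈ S then 0 else 1 - q) := by
    intro A _
    have hwt : wt n q A = (∏ _i ∈ A, q) * ∏ _i ∈ Finset.univ \ A, (1 - q) := by
      simp [wt, Finset.prod_const, Finset.card_sdiff_of_subset (Finset.subset_univ A), Finset.card_univ]
    by_cases hS : S ⊆ A
    · rw [if_pos hS, mul_one, hwt]
      congr 1
      refine Finset.prod_congr rfl fun i hi => ?_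
      rw [if_neg fun hiS => (Finset.mem_sdiff.mp hi).2 (hS hiS)]
    · rw [if_neg hS, mul_zero]
      obtain ⟨i, hiS, hiA⟩ := Finset.not_subset.mp hS
      have hz : (∏ i ∈ Finset.univ \ A, if i ∈ S then (0:ℝ) else 1 - q) = 0 :=
        Finset.prod_eq_zero (i := i) (by simp [hiA]) (by simp [hiS])
      rw [hz, mul_zero]
  rw [Finset.sum_congr rfl h, ← Finset.prod_add]
  have h2 : ∀ i : Fin n, (q + if i ∈ S then 0 else 1 - q) = if i ∈ S then q else 1 := by
    intro i; split <;> ring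
  rw [Finset.prod_congr rfl fun i _ => h2 i, Finset.prod_ite_mem, Finset.univ_inter,
    Finset.prod_const]

private lemma exp_sum {n : ℕ} (q : ℝ) {ι : Type*} (s : Finset ι) (f : ι → ℝ)
    (S : ι → Finset (Fin n)) :
    ∑ A ∈ Finset.univ.powerset, wt n q A * ∑ p ∈ s, f p * (if S p ⊆ A then (1:ℝ) else 0)
      = ∑ p ∈ s, f p * q ^ (S p).card := by
  have h : ∀ A ∈ (Finset.univ : Finset (Fin n)).powerset,
      wt n q A * ∑ p ∈ s, f p * (if S p ⊆ A then (1:ℝ) else 0)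
        = ∑ p ∈ s, f p * (wt n q A * (if S p ⊆ A then (1:ℝ) else 0)) := by
    intro A _
    rw [Finset.mul_sum]
    exact Finset.sum_congr rfl fun p _ => by ring
  rw [Finset.sum_congr rfl h, Finset.sum_comm]
  exact Finset.sum_congr rfl fun p _ => by rw [← Finset.mul_sum, key_moment]

private lemma soff_eq {n : ℕ} (K : Matrix (Fin n) (Fin n) ℝ) (A : Finset (Fin n)) :
    soff K A = ∑ p : Fin n × Fin n, (if p.1 = p.2 then 0 else K p.1 p.2)
      * (if ({p.1, p.2} : Finset (Fin n)) ⊆ A then (1:ℝ) else 0) := by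
  have e1 : ∀ (f : Fin n → ℝ), ∑ i ∈ A, f i = ∑ i, if i ∈ A then f i else 0 := by
    intro f; rw [Finset.sum_ite_mem, Finset.univ_inter]
  rw [soff, e1, Fintype.sum_prod_type]
  refine Finset.sum_congr rfl fun i _ => ?_
  by_cases hi : i ∈ A
  · rw [if_pos hi, e1]
    refine Finset.sum_congr rfl fun j _ => ?_
    by_cases hj : j ∈ A <;> simp [hi, hj, Finset.insert_subset_iff]
  · rw [if_neg hi]
    symm
    refine Finset.sum_eq_zero fun j _ => ?_
    simp [Finset.insert_subset_iff, hi]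

private lemma ind_mul {n : ℕ} (S T A : Finset (Fin n)) :
    (if S ⊆ A then (1:ℝ) else 0) * (if T ⊆ A then (1:ℝ) else 0)
      = if S ∪ T ⊆ A then (1:ℝ) else 0 := by
  by_cases h1 : S ⊆ A <;> by_cases h2 : T ⊆ A <;>
    simp [h1, h2, Finset.union_subset_iff]

private lemma card3 {n : ℕ} (a b c : Fin n) (h1 : a ≠ b) (h2 : a ≠ c) (h3 : b ≠ c) :
    ({a, b, c} : Finset (Fin n)).card = 3 := by
  rw [Finset.card_insert_of_notMem (by simp [h1, h2]), Finset.card_pair h3]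

private lemma pointwise_bound {n : ℕ} {K : Matrix (Fin n) (Fin n) ℝ} {α q : ℝ}
    (hα0 : 0 ≤ α) (hq0 : 0 < q) (hq1 : q ≤ 1)
    (hK : ∀ i j, 0 ≤ K i j ∧ K i j ≤ α)
    (i j k l : Fin n) (hij : i ≠ j) :
    (if k = l then 0 else K k l)
        * (q ^ (({i, j} ∪ {k, l} : Finset (Fin n))).card - q ^ 4)
      ≤ α * q ^ 2 * ((if (k, l) = (i, j) then (1:ℝ) else 0)
            + (if (k, l) = (j, i) then (1:ℝ) else 0))
        + q ^ 3 * (if k = l then 0 else K k l)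
          * ((if k = i then (1:ℝ) else 0) + (if k = j then (1:ℝ) else 0)
             + (if l = i then (1:ℝ) else 0) + (if l = j then (1:ℝ) else 0)) := by
  have hq0' : (0:ℝ) ≤ q := le_of_lt hq0
  have h43 : q ^ 4 ≤ q ^ 3 := pow_le_pow_of_le_one hq0' hq1 (by norm_num)
  have hq2 : (0:ℝ) ≤ q ^ 2 := by positivity
  have hq3 : (0:ℝ) ≤ q ^ 3 := by positivity
  have hq4 : (0:ℝ) ≤ q ^ 4 := by positivity
  by_cases hkl : k = l
  · rw [if_pos hkl,
      if_neg (fun h : (k, l) = (i, j) =>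
        hij ((congrArg Prod.fst h).symm.trans (hkl.trans (congrArg Prod.snd h)))),
      if_neg (fun h : (k, l) = (j, i) =>
        hij ((congrArg Prod.snd h).symm.trans (hkl.symm.trans (congrArg Prod.fst h))))]
    norm_num
  · have hc0 : (0:ℝ) ≤ K k l := (hK k l).1
    have hcα : K k l ≤ α := (hK k l).2
    rw [if_neg hkl]
    have hints := mul_le_mul_of_nonneg_right hcα hq2
    have h2 := mul_nonneg hc0 hq3
    have h3 := mul_nonneg hc0 hq4
    by_cases hki : k = i
    · by_cases hlj : l = j
      · -- (k,l) = (i,j)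
        have hset : ({i, j} ∪ {k, l} : Finset (Fin n)) = {i, j} := by
          ext x; simp [hki, hlj]; try tauto
        rw [hset, Finset.card_pair hij,
          if_pos (show (k, l) = (i, j) by rw [hki, hlj]),
          if_neg (fun h : (k, l) = (j, i) => hij (hki.symm.trans (congrArg Prod.fst h))),
          if_pos hki,
          if_neg (fun h : k = j => hij (hki.symm.trans h)),
          if_neg (fun h : l = i => hij (h.symm.trans hlj)),
          if_pos hlj]
        nlinarith
      · -- overlap in one index: k = i, l ∉ {i,j}
        have hli : ¬ l = i := fun h => hkl (hki.trans h.symm)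
        have hset : ({i, j} ∪ {k, l} : Finset (Fin n)) = {i, j, l} := by
          ext x; simp [hki]; try tauto
        rw [hset, card3 i j l hij (fun h => hli h.symm) (fun h => hlj h.symm),
          if_neg (fun h : (k, l) = (i, j) => hlj (congrArg Prod.snd h)),
          if_neg (fun h : (k, l) = (j, i) => hij (hki.symm.trans (congrArg Prod.fst h))),
          if_pos hki,
          if_neg (fun h : k = j => hij (hki.symm.trans h)),
          if_neg hli, if_neg hlj]
        nlinarith
    · by_cases hkj : k = j
      · by_cases hli : l = i
        · -- (k,l) = (j,i)
          have hset : ({i, j} ∪ {k, l} : Finset (Fin n)) = {i, j} := by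
            ext x; simp [hkj, hli]; try tauto
          rw [hset, Finset.card_pair hij,
            if_neg (fun h : (k, l) = (i, j) => hki (congrArg Prod.fst h)),
            if_pos (show (k, l) = (j, i) by rw [hkj, hli]),
            if_neg hki, if_pos hkj, if_pos hli,
            if_neg (fun h : l = j => hkl (hkj.trans h.symm))]
          nlinarith
        · -- k = j, l ∉ {i,j}
          have hlj : ¬ l = j := fun h => hkl (hkj.trans h.symm)
          have hset : ({i, j} ∪ {k, l} : Finset (Fin n)) = {i, j, l} := by
            ext x; simp [hkj]; try tauto
          rw [hset, card3 i j l hij (fun h => hli h.symm) (fun h => hlj h.symm),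
            if_neg (fun h : (k, l) = (i, j) => hki (congrArg Prod.fst h)),
            if_neg (fun h : (k, l) = (j, i) => hli (congrArg Prod.snd h)),
            if_neg hki, if_pos hkj, if_neg hli, if_neg hlj]
          nlinarith
      · by_cases hli : l = i
        · have hset : ({i, j} ∪ {k, l} : Finset (Fin n)) = {i, j, k} := by
            ext x; simp [hli]; try tauto
          rw [hset, card3 i j k hij (fun h => hki h.symm) (fun h => hkj h.symm),
            if_neg (fun h : (k, l) = (i, j) => hki (congrArg Prod.fst h)),
            if_neg (fun h : (k, l) = (j, i) => hkj (congrArg Prod.fst h)),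
            if_neg hki, if_neg hkj, if_pos hli,
            if_neg (fun h : l = j => hij (hli.symm.trans h))]
          nlinarith
        · by_cases hlj : l = j
          · have hset : ({i, j} ∪ {k, l} : Finset (Fin n)) = {i, j, k} := by
              ext x; simp [hlj]; try tauto
            rw [hset, card3 i j k hij (fun h => hki h.symm) (fun h => hkj h.symm),
              if_neg (fun h : (k, l) = (i, j) => hki (congrArg Prod.fst h)),
              if_neg (fun h : (k, l) = (j, i) => hkj (congrArg Prod.fst h)),
              if_neg hki, if_neg hkj, if_neg hli, if_pos hlj]
            nlinarith
          · -- all distinct: card 4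
            have hset : ({i, j} ∪ {k, l} : Finset (Fin n)) = {i, j, k, l} := by
              ext x; simp; try tauto
            have hcard : ({i, j, k, l} : Finset (Fin n)).card = 4 := by
              rw [Finset.card_insert_of_notMem
                  (by simp only [Finset.mem_insert, Finset.mem_singleton]
                      push_neg
                      exact ⟨hij, fun h => hki h.symm, fun h => hli h.symm⟩),
                card3 j k l (fun h => hkj h.symm) (fun h => hlj h.symm) hkl]
            rw [hset, hcard,
              if_neg (fun h : (k, l) = (i, j) => hki (congrArg Prod.fst h)),
              if_neg (fun h : (k, l) = (j, i) => hkj (congrArg Prod.fst h)),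
              if_neg hki, if_neg hkj, if_neg hli, if_neg hlj]
            nlinarith

private lemma exp_sum2 {n : ℕ} (q : ℝ) {ι κ : Type*} (s : Finset ι) (t : Finset κ)
    (f : ι → κ → ℝ) (S : ι → κ → Finset (Fin n)) :
    ∑ A ∈ Finset.univ.powerset,
        wt n q A * ∑ p ∈ s, ∑ r ∈ t, f p r * (if S p r ⊆ A then (1:ℝ) else 0)
      = ∑ p ∈ s, ∑ r ∈ t, f p r * q ^ (S p r).card := by
  have h : ∀ A ∈ (Finset.univ : Finset (Fin n)).powerset,
      wt n q A * ∑ p ∈ s, ∑ r ∈ t, f p r * (if S p r ⊆ A then (1:ℝ) else 0)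
        = ∑ p ∈ s, wt n q A * ∑ r ∈ t, f p r * (if S p r ⊆ A then (1:ℝ) else 0) :=
    fun A _ => Finset.mul_sum _ _ _
  rw [Finset.sum_congr rfl h, Finset.sum_comm]
  exact Finset.sum_congr rfl fun p _ => exp_sum q t (f p) (S p)


set_option maxHeartbeats 1600000 in
theorem stmt9 : ∃ C : ℝ, 0 < C ∧
    ∀ (n : ℕ) (K : Matrix (Fin n) (Fin n) ℝ), K.IsSymm →
    ∀ α : ℝ, 0 ≤ α → α ≤ 1 → (∀ i j, 0 ≤ K i j ∧ K i j ≤ α) →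
    ∀ β : ℝ, 0 ≤ β → (∀ i, (∑ j, if j = i then 0 else K i j) ≤ β) →
    ∀ q : ℝ, 0 < q → q ≤ 1 →
    (∑ A ∈ Finset.univ.powerset, wt n q A * (K.trace + soff K A / q ^ 2))
        = ∑ i, ∑ j, K i j ∧
    (∑ A ∈ Finset.univ.powerset,
        wt n q A * ((K.trace + soff K A / q ^ 2) - ∑ i, ∑ j, K i j) ^ 2)
        ≤ C * (α / q ^ 2 + β / q) * (∑ i, ∑ j, K i j) := by
  refine ⟨4, by norm_num, ?_⟩
  intro n K hsym α hα0 hα1 hK β hβ0 hβ q hq0 hq1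
  have hq0' : (0:ℝ) ≤ q := hq0.le
  have hqne : (q:ℝ) ≠ 0 := hq0.ne'
  have hq2 : (0:ℝ) ≤ q ^ 2 := by positivity
  have hq3 : (0:ℝ) ≤ q ^ 3 := by positivity
  -- notation
  set so : ℝ := ∑ i, ∑ j, if i = j then 0 else K i j with hso
  -- trace identity
  have htrace : K.trace = ∑ i, K i i := by simp [Matrix.trace, Matrix.diag]
  have htr : (∑ i, ∑ j, K i j) = K.trace + so := by
    rw [htrace, hso, ← Finset.sum_add_distrib]
    refine Finset.sum_congr rfl fun i _ => ?_
    have h1 : K i i = ∑ j, if i = j then K i j else 0 := by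
      rw [Finset.sum_ite_eq]; simp
    rw [h1, ← Finset.sum_add_distrib]
    exact Finset.sum_congr rfl fun j _ => by by_cases h : i = j <;> simp [h]
  -- basic expectations
  have hE1 : (∑ A ∈ (Finset.univ : Finset (Fin n)).powerset, wt n q A) = 1 := by
    have h := key_moment (n := n) q (∅ : Finset (Fin n))
    simpa using h
  have hsoP : so = ∑ p : Fin n × Fin n, (if p.1 = p.2 then (0:ℝ) else K p.1 p.2) := by
    rw [hso, Fintype.sum_prod_type]
  have hEsoff : (∑ A ∈ (Finset.univ : Finset (Fin n)).powerset, wt n q A * soff K A)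
      = q ^ 2 * so := by
    have h := exp_sum (n := n) q Finset.univ
      (fun p : Fin n × Fin n => if p.1 = p.2 then (0:ℝ) else K p.1 p.2)
      (fun p : Fin n × Fin n => ({p.1, p.2} : Finset (Fin n)))
    have h2 : (∑ A ∈ (Finset.univ : Finset (Fin n)).powerset, wt n q A * soff K A)
        = ∑ p : Fin n × Fin n, (if p.1 = p.2 then (0:ℝ) else K p.1 p.2)
            * q ^ ({p.1, p.2} : Finset (Fin n)).card := by
      rw [← h]
      exact Finset.sum_congr rfl fun A _ => by rw [soff_eq]
    rw [h2, hsoP, Finset.mul_sum]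
    refine Finset.sum_congr rfl fun p _ => ?_
    by_cases hp : p.1 = p.2
    · simp [hp]
    · rw [Finset.card_pair hp]; ring
  -- Part 1
  have part1 : (∑ A ∈ (Finset.univ : Finset (Fin n)).powerset,
      wt n q A * (K.trace + soff K A / q ^ 2)) = ∑ i, ∑ j, K i j := by
    have hpt : ∀ A ∈ (Finset.univ : Finset (Fin n)).powerset,
        wt n q A * (K.trace + soff K A / q ^ 2)
          = K.trace * wt n q A + (wt n q A * soff K A) / q ^ 2 := fun A _ => by ring
    rw [Finset.sum_congr rfl hpt, Finset.sum_add_distrib, ← Finset.mul_sum,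
      ← Finset.sum_div, hE1, hEsoff, htr]
    field_simp
  refine ⟨part1, ?_⟩
  -- Part 2 : variance bound
  -- abbreviation for coefficients
  have hc0 : ∀ p : Fin n × Fin n, (0:ℝ) ≤ (if p.1 = p.2 then (0:ℝ) else K p.1 p.2) := by
    intro p; by_cases h : p.1 = p.2 <;> simp [h, (hK p.1 p.2).1]
  -- second moment
  have hsq : ∀ A : Finset (Fin n), soff K A ^ 2
      = ∑ p : Fin n × Fin n, ∑ r : Fin n × Fin n,
          ((if p.1 = p.2 then (0:ℝ) else K p.1 p.2) * (if r.1 = r.2 then (0:ℝ) else K r.1 r.2))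
            * (if ({p.1, p.2} ∪ {r.1, r.2} : Finset (Fin n)) ⊆ A then (1:ℝ) else 0) := by
    intro A
    rw [sq, soff_eq, Finset.sum_mul_sum]
    exact Finset.sum_congr rfl fun p _ => Finset.sum_congr rfl fun r _ => by
      rw [mul_mul_mul_comm, ind_mul]
  have hT : (∑ A ∈ (Finset.univ : Finset (Fin n)).powerset, wt n q A * soff K A ^ 2)
      = ∑ p : Fin n × Fin n, ∑ r : Fin n × Fin n,
          ((if p.1 = p.2 then (0:ℝ) else K p.1 p.2) * (if r.1 = r.2 then (0:ℝ) else K r.1 r.2))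
            * q ^ (({p.1, p.2} ∪ {r.1, r.2} : Finset (Fin n))).card := by
    have h := exp_sum2 (n := n) q Finset.univ Finset.univ
      (fun p r : Fin n × Fin n =>
        (if p.1 = p.2 then (0:ℝ) else K p.1 p.2) * (if r.1 = r.2 then (0:ℝ) else K r.1 r.2))
      (fun p r : Fin n × Fin n => ({p.1, p.2} ∪ {r.1, r.2} : Finset (Fin n)))
    rw [← h]
    exact Finset.sum_congr rfl fun A _ => by rw [hsq]
  have hso2 : so ^ 2 = ∑ p : Fin n × Fin n, ∑ r : Fin n × Fin n,
      (if p.1 = p.2 then (0:ℝ) else K p.1 p.2) * (if r.1 = r.2 then (0:ℝ) else K r.1 r.2) := by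
    rw [sq, hsoP, Finset.sum_mul_sum]
  -- variance equals D / q^4
  have hVeq : (∑ A ∈ (Finset.univ : Finset (Fin n)).powerset,
      wt n q A * ((K.trace + soff K A / q ^ 2) - ∑ i, ∑ j, K i j) ^ 2)
      = (∑ p : Fin n × Fin n, ∑ r : Fin n × Fin n,
          (if p.1 = p.2 then (0:ℝ) else K p.1 p.2) *
          ((if r.1 = r.2 then (0:ℝ) else K r.1 r.2)
            * (q ^ (({p.1, p.2} ∪ {r.1, r.2} : Finset (Fin n))).card - q ^ 4))) / q ^ 4 := by
    have expand : ∀ A ∈ (Finset.univ : Finset (Fin n)).powerset,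
        wt n q A * ((K.trace + soff K A / q ^ 2) - ∑ i, ∑ j, K i j) ^ 2
          = (wt n q A * soff K A ^ 2) / q ^ 4
            - (2 * so / q ^ 2) * (wt n q A * soff K A) + so ^ 2 * wt n q A := by
      intro A _
      rw [htr]
      field_simp
      ring
    rw [Finset.sum_congr rfl expand, Finset.sum_add_distrib, Finset.sum_sub_distrib,
      ← Finset.sum_div, ← Finset.mul_sum, ← Finset.mul_sum, hT, hEsoff, hE1]
    have hsplit : (∑ p : Fin n × Fin n, ∑ r : Fin n × Fin n,
        (if p.1 = p.2 then (0:ℝ) else K p.1 p.2) *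
          ((if r.1 = r.2 then (0:ℝ) else K r.1 r.2)
            * (q ^ (({p.1, p.2} ∪ {r.1, r.2} : Finset (Fin n))).card - q ^ 4)))
        = (∑ p : Fin n × Fin n, ∑ r : Fin n × Fin n,
            ((if p.1 = p.2 then (0:ℝ) else K p.1 p.2) * (if r.1 = r.2 then (0:ℝ) else K r.1 r.2))
              * q ^ (({p.1, p.2} ∪ {r.1, r.2} : Finset (Fin n))).card)
          - q ^ 4 * ∑ p : Fin n × Fin n, ∑ r : Fin n × Fin n,
              (if p.1 = p.2 then (0:ℝ) else K p.1 p.2)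
                * (if r.1 = r.2 then (0:ℝ) else K r.1 r.2) := by
      rw [Finset.mul_sum, ← Finset.sum_sub_distrib]
      refine Finset.sum_congr rfl fun p _ => ?_
      rw [Finset.mul_sum, ← Finset.sum_sub_distrib]
      exact Finset.sum_congr rfl fun r _ => by ring
    rw [hsplit, ← hso2]
    field_simp
    ring
  rw [hVeq]
  -- row and column bounds
  have hrow : ∀ i : Fin n, (∑ l, if i = l then (0:ℝ) else K i l) ≤ β := by
    intro i
    have he : (∑ l, if i = l then (0:ℝ) else K i l)
        = ∑ l, if l = i then (0:ℝ) else K i l :=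
      Finset.sum_congr rfl fun l _ => by
        by_cases h : i = l
        · simp [h]
        · rw [if_neg h, if_neg fun hh => h hh.symm]
    rw [he]; exact hβ i
  have hcol : ∀ i : Fin n, (∑ k, if k = i then (0:ℝ) else K k i) ≤ β := by
    intro i
    have he : (∑ k, if k = i then (0:ℝ) else K k i)
        = ∑ k, if k = i then (0:ℝ) else K i k :=
      Finset.sum_congr rfl fun k _ => by rw [hsym.apply i k]
    rw [he]; exact hβ i
  -- inner sum bound
  have inner : ∀ p : Fin n × Fin n, p.1 ≠ p.2 →
      (∑ r : Fin n × Fin n, (if r.1 = r.2 then (0:ℝ) else K r.1 r.2)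
          * (q ^ (({p.1, p.2} ∪ {r.1, r.2} : Finset (Fin n))).card - q ^ 4))
        ≤ 2 * α * q ^ 2 + 4 * β * q ^ 3 := by
    intro p hp
    have step1 : (∑ r : Fin n × Fin n, (if r.1 = r.2 then (0:ℝ) else K r.1 r.2)
          * (q ^ (({p.1, p.2} ∪ {r.1, r.2} : Finset (Fin n))).card - q ^ 4))
        ≤ ∑ r : Fin n × Fin n,
            (α * q ^ 2 * ((if (r.1, r.2) = (p.1, p.2) then (1:ℝ) else 0)
                + (if (r.1, r.2) = (p.2, p.1) then (1:ℝ) else 0))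
              + q ^ 3 * (if r.1 = r.2 then (0:ℝ) else K r.1 r.2)
                * ((if r.1 = p.1 then (1:ℝ) else 0) + (if r.1 = p.2 then (1:ℝ) else 0)
                   + (if r.2 = p.1 then (1:ℝ) else 0) + (if r.2 = p.2 then (1:ℝ) else 0))) :=
      Finset.sum_le_sum fun r _ =>
        pointwise_bound hα0 hq0 hq1 hK p.1 p.2 r.1 r.2 hp
    refine le_trans step1 ?_
    have hre : ∀ r : Fin n × Fin n,
        (α * q ^ 2 * ((if (r.1, r.2) = (p.1, p.2) then (1:ℝ) else 0)
            + (if (r.1, r.2) = (p.2, p.1) then (1:ℝ) else 0))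
          + q ^ 3 * (if r.1 = r.2 then (0:ℝ) else K r.1 r.2)
            * ((if r.1 = p.1 then (1:ℝ) else 0) + (if r.1 = p.2 then (1:ℝ) else 0)
               + (if r.2 = p.1 then (1:ℝ) else 0) + (if r.2 = p.2 then (1:ℝ) else 0)))
        = α * q ^ 2 * (if (r.1, r.2) = (p.1, p.2) then (1:ℝ) else 0)
          + α * q ^ 2 * (if (r.1, r.2) = (p.2, p.1) then (1:ℝ) else 0)
          + q ^ 3 * ((if r.1 = r.2 then (0:ℝ) else K r.1 r.2) * (if r.1 = p.1 then (1:ℝ) else 0))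
          + q ^ 3 * ((if r.1 = r.2 then (0:ℝ) else K r.1 r.2) * (if r.1 = p.2 then (1:ℝ) else 0))
          + q ^ 3 * ((if r.1 = r.2 then (0:ℝ) else K r.1 r.2) * (if r.2 = p.1 then (1:ℝ) else 0))
          + q ^ 3 * ((if r.1 = r.2 then (0:ℝ) else K r.1 r.2) * (if r.2 = p.2 then (1:ℝ) else 0)) :=
      fun r => by ring
    rw [Finset.sum_congr rfl fun r _ => hre r]
    rw [Finset.sum_add_distrib, Finset.sum_add_distrib, Finset.sum_add_distrib,
      Finset.sum_add_distrib, Finset.sum_add_distrib,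
      ← Finset.mul_sum, ← Finset.mul_sum, ← Finset.mul_sum, ← Finset.mul_sum,
      ← Finset.mul_sum, ← Finset.mul_sum]
    -- the two indicator sums
    have SI1 : (∑ r : Fin n × Fin n, (if (r.1, r.2) = (p.1, p.2) then (1:ℝ) else 0)) = 1 := by
      simp only [Prod.mk.eta]
      rw [Finset.sum_ite_eq' Finset.univ p (fun _ => (1:ℝ))]
      simp
    have SI2 : (∑ r : Fin n × Fin n, (if (r.1, r.2) = (p.2, p.1) then (1:ℝ) else 0)) = 1 := by
      simp only [Prod.mk.eta]
      rw [Finset.sum_ite_eq' Finset.univ (p.2, p.1) (fun _ => (1:ℝ))]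
      simp
    have SJ1 : (∑ r : Fin n × Fin n, (if r.1 = r.2 then (0:ℝ) else K r.1 r.2)
        * (if r.1 = p.1 then (1:ℝ) else 0)) ≤ β := by
      rw [Fintype.sum_prod_type]
      have h1 : ∀ k : Fin n, (∑ l, (if k = l then (0:ℝ) else K k l) * (if k = p.1 then (1:ℝ) else 0))
          = if k = p.1 then (∑ l, if k = l then (0:ℝ) else K k l) else 0 := by
        intro k; by_cases h : k = p.1 <;> simp [h, Finset.mul_sum]
      rw [Finset.sum_congr rfl fun k _ => h1 k, Finset.sum_ite_eq' Finset.univ p.1]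
      simpa using hrow p.1
    have SJ2 : (∑ r : Fin n × Fin n, (if r.1 = r.2 then (0:ℝ) else K r.1 r.2)
        * (if r.1 = p.2 then (1:ℝ) else 0)) ≤ β := by
      rw [Fintype.sum_prod_type]
      have h1 : ∀ k : Fin n, (∑ l, (if k = l then (0:ℝ) else K k l) * (if k = p.2 then (1:ℝ) else 0))
          = if k = p.2 then (∑ l, if k = l then (0:ℝ) else K k l) else 0 := by
        intro k; by_cases h : k = p.2 <;> simp [h, Finset.mul_sum]
      rw [Finset.sum_congr rfl fun k _ => h1 k, Finset.sum_ite_eq' Finset.univ p.2]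
      simpa using hrow p.2
    have SJ3 : (∑ r : Fin n × Fin n, (if r.1 = r.2 then (0:ℝ) else K r.1 r.2)
        * (if r.2 = p.1 then (1:ℝ) else 0)) ≤ β := by
      rw [Fintype.sum_prod_type]
      have h1 : ∀ k : Fin n, (∑ l, (if k = l then (0:ℝ) else K k l) * (if l = p.1 then (1:ℝ) else 0))
          = if k = p.1 then (0:ℝ) else K k p.1 := by
        intro k
        have h2 : ∀ l : Fin n, (if k = l then (0:ℝ) else K k l) * (if l = p.1 then (1:ℝ) else 0)
            = if l = p.1 then (if k = l then (0:ℝ) else K k l) else 0 := by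
          intro l; by_cases h : l = p.1 <;> simp [h]
        rw [Finset.sum_congr rfl fun l _ => h2 l, Finset.sum_ite_eq' Finset.univ p.1]
        simp
      rw [Finset.sum_congr rfl fun k _ => h1 k]
      exact hcol p.1
    have SJ4 : (∑ r : Fin n × Fin n, (if r.1 = r.2 then (0:ℝ) else K r.1 r.2)
        * (if r.2 = p.2 then (1:ℝ) else 0)) ≤ β := by
      rw [Fintype.sum_prod_type]
      have h1 : ∀ k : Fin n, (∑ l, (if k = l then (0:ℝ) else K k l) * (if l = p.2 then (1:ℝ) else 0))
          = if k = p.2 then (0:ℝ) else K k p.2 := by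
        intro k
        have h2 : ∀ l : Fin n, (if k = l then (0:ℝ) else K k l) * (if l = p.2 then (1:ℝ) else 0)
            = if l = p.2 then (if k = l then (0:ℝ) else K k l) else 0 := by
          intro l; by_cases h : l = p.2 <;> simp [h]
        rw [Finset.sum_congr rfl fun l _ => h2 l, Finset.sum_ite_eq' Finset.univ p.2]
        simp
      rw [Finset.sum_congr rfl fun k _ => h1 k]
      exact hcol p.2
    rw [SI1, SI2]
    have hαq : (0:ℝ) ≤ α * q ^ 2 := by positivity
    nlinarith [mul_le_mul_of_nonneg_left SJ1 hq3, mul_le_mul_of_nonneg_left SJ2 hq3,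
      mul_le_mul_of_nonneg_left SJ3 hq3, mul_le_mul_of_nonneg_left SJ4 hq3]
  -- assemble
  have hD : (∑ p : Fin n × Fin n, ∑ r : Fin n × Fin n,
      (if p.1 = p.2 then (0:ℝ) else K p.1 p.2) *
      ((if r.1 = r.2 then (0:ℝ) else K r.1 r.2)
        * (q ^ (({p.1, p.2} ∪ {r.1, r.2} : Finset (Fin n))).card - q ^ 4)))
      ≤ (2 * α * q ^ 2 + 4 * β * q ^ 3) * so := by
    have hstep : ∀ p : Fin n × Fin n,
        (∑ r : Fin n × Fin n, (if p.1 = p.2 then (0:ℝ) else K p.1 p.2) *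
          ((if r.1 = r.2 then (0:ℝ) else K r.1 r.2)
            * (q ^ (({p.1, p.2} ∪ {r.1, r.2} : Finset (Fin n))).card - q ^ 4)))
          ≤ (if p.1 = p.2 then (0:ℝ) else K p.1 p.2) * (2 * α * q ^ 2 + 4 * β * q ^ 3) := by
      intro p
      rw [← Finset.mul_sum]
      by_cases hp : p.1 = p.2
      · simp [hp]
      · exact mul_le_mul_of_nonneg_left (inner p hp) (hc0 p)
    calc _ ≤ ∑ p : Fin n × Fin n,
          (if p.1 = p.2 then (0:ℝ) else K p.1 p.2) * (2 * α * q ^ 2 + 4 * β * q ^ 3) :=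
        Finset.sum_le_sum fun p _ => hstep p
      _ = (2 * α * q ^ 2 + 4 * β * q ^ 3) * so := by
        rw [← Finset.sum_mul, ← hsoP, mul_comm]
  -- final numeric chain
  have hso0 : (0:ℝ) ≤ so := by
    rw [hsoP]; exact Finset.sum_nonneg fun p _ => hc0 p
  have hsos : so ≤ ∑ i, ∑ j, K i j := by
    rw [htr, htrace]
    have : (0:ℝ) ≤ ∑ i, K i i := Finset.sum_nonneg fun i _ => (hK i i).1
    linarith
  have hq4pos : (0:ℝ) < q ^ 4 := by positivity
  rw [div_le_iff₀ hq4pos]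
  have hkey : 4 * (α / q ^ 2 + β / q) * (∑ i, ∑ j, K i j) * q ^ 4
      = 4 * α * (∑ i, ∑ j, K i j) * q ^ 2 + 4 * β * (∑ i, ∑ j, K i j) * q ^ 3 := by
    field_simp
  rw [hkey]
  have h1 : (2 * α * q ^ 2 + 4 * β * q ^ 3) * so
      ≤ 4 * α * (∑ i, ∑ j, K i j) * q ^ 2 + 4 * β * (∑ i, ∑ j, K i j) * q ^ 3 := by
    have e1 := mul_le_mul_of_nonneg_left hsos (by positivity : (0:ℝ) ≤ α * q ^ 2)
    have e2 := mul_le_mul_of_nonneg_left hsos (by positivity : (0:ℝ) ≤ β * q ^ 3)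
    have e3 : (0:ℝ) ≤ α * q ^ 2 * so := mul_nonneg (by positivity) hso0
    have e4 : (0:ℝ) ≤ β * q ^ 3 * so := mul_nonneg (by positivity) hso0
    nlinarith [e1, e2, e3, e4]
  linarith [hD]
end

section
/- Let n points be drawn i.i.d. from the distribution D(p) over ℝⁿ that returns the scaled basis vector n^{100}·e_i for uniformly random i with probability 1−p, and the origin 0 with probability p. Let c_x denote the number of sampled points equal to x. For the Gaussian-type kernel with k(x,y) ≈ 0 for distinct points (k(x,x)=1), the kernel matrix sum satisfies E[s(K)] = ∑_x E[c_x²] + o(e^{−n}) = 2n + n²p² + o(n). -/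
/-!
Write `c_x = ∑_t 1[ω t = x]` for `m` independent draws with law `w`. Then `E[c_x²]` is a sum over
pairs `(s, t)` of the probability that draws `s` and `t` both equal `x`, which by independence is
`w x` if `s = t` and `w x ^ 2` otherwise. Hence `E[∑_x c_x²] = m + m (m - 1) ∑_x w x ^ 2`; for
`D(p)` with `m = n` this is the stated closed form, which differs from `2n + n²p²` by
`1 + 2(n - 1)p + p² ≤ 1 + 2np ≤ 1 + 4√n`.
-/

/-- Probability of the outcome `ω` of `n` i.i.d. draws from the distribution `D(p)`,
where `none` encodes drawing the origin (probability `p`) and `some i` encodes drawing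
the scaled basis vector `n^100 • eᵢ` (probability `(1-p)/n` each). -/
noncomputable def drawWt (n : ℕ) (p : ℝ) (ω : Fin n → Option (Fin n)) : ℝ :=
  ∏ t, (match ω t with
        | none => p
        | some _ => (1 - p) / n)

/-- The number of the `n` drawn points equal to the point encoded by `x`. -/
def cnt (n : ℕ) (ω : Fin n → Option (Fin n)) (x : Option (Fin n)) : ℕ :=
  (Finset.univ.filter (fun t => ω t = x)).card

open Finset

section IidDraws

variable {ι α : Type*} [Fintype ι] [DecidableEq ι] [Fintype α] [DecidableEq α] {w : α → ℝ}

theorem sum_prod_mul_ite_forall_mem_eq_pow_card (hw : ∑ a, w a = 1) (S : Finset ι) (x : α) :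
    ∑ ω : ι → α, (∏ t, w (ω t)) * (if ∀ t ∈ S, ω t = x then 1 else 0) = w x ^ #S := by
  have factor (u : ι) :
      ∑ a, w a * (if u ∈ S then (if a = x then 1 else 0) else 1) = if u ∈ S then w x else 1 := by
    split_ifs <;> simp [hw]
  calc ∑ ω : ι → α, (∏ t, w (ω t)) * (if ∀ t ∈ S, ω t = x then 1 else 0)
      = ∑ ω : ι → α, ∏ u, w (ω u) * (if u ∈ S then (if ω u = x then 1 else 0) else 1) := by
        simp_rw [prod_mul_distrib, prod_ite_mem, univ_inter, prod_boole]
        congr! -- the two sides carry different `Decidable` instances for `∀ t ∈ S, _`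
    _ = ∏ u, ∑ a, w a * (if u ∈ S then (if a = x then 1 else 0) else 1) := by
        rw [Fintype.prod_sum]
    _ = w x ^ #S := by simp_rw [factor, prod_ite_mem, univ_inter, prod_const]

theorem sum_prod_mul_card_filter_sq (hw : ∑ a, w a = 1) (x : α) :
    ∑ ω : ι → α, (∏ t, w (ω t)) * (#{t | ω t = x} : ℝ) ^ 2
      = Fintype.card ι * w x + Fintype.card ι * (Fintype.card ι - 1) * w x ^ 2 := by
  have square (ω : ι → α) : (#{t | ω t = x} : ℝ) ^ 2
      = ∑ s, ∑ t, if ∀ u ∈ ({s, t} : Finset ι), ω u = x then 1 else 0 := by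
    simp_rw [card_filter, Nat.cast_sum, Nat.cast_ite, Nat.cast_one, Nat.cast_zero, sq, sum_mul_sum,
      ite_zero_mul_ite_zero, mul_one]
    simp
  have pair (s t : ι) :
      w x ^ #({s, t} : Finset ι) = w x ^ 2 + if s = t then w x - w x ^ 2 else 0 := by
    by_cases h : s = t <;> simp [h]
  simp_rw [square, mul_sum]
  rw [sum_comm]
  simp_rw [sum_comm (γ := ι → α), sum_prod_mul_ite_forall_mem_eq_pow_card hw, pair, sum_add_distrib,
    sum_ite_eq, mem_univ, if_true, sum_const, card_univ, nsmul_eq_mul]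
  ring

theorem sum_prod_mul_sum_card_filter_sq (hw : ∑ a, w a = 1) :
    ∑ ω : ι → α, (∏ t, w (ω t)) * ∑ x, (#{t | ω t = x} : ℝ) ^ 2
      = Fintype.card ι + Fintype.card ι * (Fintype.card ι - 1) * ∑ x, w x ^ 2 := by
  simp_rw [mul_sum]
  rw [sum_comm]
  simp_rw [sum_prod_mul_card_filter_sq hw, sum_add_distrib, ← mul_sum, hw, mul_one]

end IidDraws

noncomputable def drawProb (n : ℕ) (p : ℝ) : Option (Fin n) → ℝ
  | none => p
  | some _ => (1 - p) / n

theorem drawWt_eq_prod (n : ℕ) (p : ℝ) (ω : Fin n → Option (Fin n)) :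
    drawWt n p ω = ∏ t, drawProb n p (ω t) := rfl

theorem sum_drawProb {n : ℕ} (hn : n ≠ 0) (p : ℝ) : ∑ a, drawProb n p a = 1 := by
  simp [Fintype.sum_option, drawProb, mul_div_cancel₀ _ (Nat.cast_ne_zero.mpr hn : (n : ℝ) ≠ 0)]

theorem sum_drawProb_sq (n : ℕ) (p : ℝ) :
    ∑ a, drawProb n p a ^ 2 = p ^ 2 + n * ((1 - p) / n) ^ 2 := by
  simp [Fintype.sum_option, drawProb]

theorem one_add_two_mul_add_sq_le {n : ℕ} (hn : 1 ≤ n) {p : ℝ} (hp0 : 0 ≤ p)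
    (hp1 : p ≤ 2 / Real.sqrt n) :
    1 + 2 * ((n : ℝ) - 1) * p + p ^ 2 ≤ 8 * Real.sqrt n := by
  have hs : 1 ≤ Real.sqrt n := Real.one_le_sqrt.mpr (by exact_mod_cast hn)
  have hp2 : p ≤ 2 := hp1.trans (div_le_self zero_le_two hs)
  have hnp : n * p ≤ 2 * Real.sqrt n := by
    rw [le_div_iff₀ (by positivity)] at hp1
    nlinarith [Real.mul_self_sqrt (Nat.cast_nonneg n)]
  calc 1 + 2 * ((n : ℝ) - 1) * p + p ^ 2 = 1 + p * (2 * n - 2 + p) := by ring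
    _ ≤ 1 + p * (2 * n) := by gcongr; linarith
    _ = 1 + 2 * (n * p) := by ring
    _ ≤ 8 * Real.sqrt n := by linarith

theorem stmt12 (n : ℕ) (hn : 1 ≤ n) (p : ℝ) (hp0 : 0 ≤ p)
    (hp1 : p ≤ 2 / Real.sqrt n) :
    (∑ ω : Fin n → Option (Fin n),
        drawWt n p ω * ∑ x : Option (Fin n), (cnt n ω x : ℝ) ^ 2)
      = (n : ℝ) ^ 2 * ((n : ℝ) - 1) * ((1 - p) / n) ^ 2 + n * (1 - p)
          + n * ((n : ℝ) - 1) * p ^ 2 + n * p ∧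
    |((n : ℝ) ^ 2 * ((n : ℝ) - 1) * ((1 - p) / n) ^ 2 + n * (1 - p)
          + n * ((n : ℝ) - 1) * p ^ 2 + n * p)
        - (2 * n + (n : ℝ) ^ 2 * p ^ 2)| ≤ 8 * Real.sqrt n := by
  have hn0 : (n : ℝ) ≠ 0 := by positivity
  constructor
  · simp_rw [drawWt_eq_prod, cnt]
    rw [sum_prod_mul_sum_card_filter_sq (sum_drawProb (by omega) p), sum_drawProb_sq,
      Fintype.card_fin]
    field_simp
    ring
  · have hdiff : (n : ℝ) ^ 2 * ((n : ℝ) - 1) * ((1 - p) / n) ^ 2 + n * (1 - p)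
          + n * ((n : ℝ) - 1) * p ^ 2 + n * p - (2 * n + (n : ℝ) ^ 2 * p ^ 2)
        = -(1 + 2 * ((n : ℝ) - 1) * p + p ^ 2) := by
      field_simp
      ring
    have hn1 : (1 : ℝ) ≤ n := by exact_mod_cast hn
    rw [hdiff, abs_neg, abs_of_nonneg (by positivity)]
    exact one_add_two_mul_add_sq_le hn hp0 hp1
end
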